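/- Let K be a field and let C be a connected graded K-algebra generated in degree 1 that is the internal direct sum C = A ⊓ B of graded subalgebras A and B. Suppose that A and B are universally Koszul in the sense that for every left ideal generated in degree 1 of A (resp. of B) and every degree-one element of A (resp. B) not lying in it, the corresponding colon ideal in A (resp. in B) is again generated in degree 1. Then C has the same property: for every left ideal I of C generated in degree 1 and every x ∈ C_1 \ I, the colon ideal I : x is generated in degree 1. In particular C is universally Koszul. -/

import Mathlib

/-- The colon ideal `I : x = {a | a * x ∈ I}` of a left ideal `I` by an element `x`. -/
def colonIdeal {A : Type*} [Ring A] (I : Ideal A) (x : A) : Ideal A :=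
  Submodule.comap (LinearMap.toSpanSingleton A A x) I

/-- A left ideal is generated in degree 1, i.e. generated by a subset of the
degree-one component `D`. -/
def GenInDeg1 {A : Type*} [Ring A] (D : Set A) (I : Ideal A) : Prop :=
  ∃ S ⊆ D, I = Ideal.span S

/-!
Write `I = C·S` with `S ⊆ C_1`, `x = x_A + x_B`, and let `V_A ⊆ A_1` be the projection of
`span S` onto `A_1` along `B_1`. Since `A_+ B_+ = B_+ A_+ = 0`, in each degree `≥ 2` the ideal `I`
is the direct sum of `A_+ V_A` and `B_+ V_B`. So if `z = u + w` is homogeneous of positive degree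
with `zx = u x_A + w x_B ∈ I`, then `u x_A ∈ A_+ V_A`. If `x_A ∈ V_A`, every element of `A_1` lies
in `I : x`. Otherwise `u` lies in the colon ideal `(A V_A) : x_A` of `A`, which is generated in
degree one because `A` is universally Koszul, and each degree-one generator `t` satisfies
`t x = t x_A ∈ A_1 V_A ⊆ I`. The same holds for `w`, so `z ∈ C (I : x)_1`.
-/

open DirectSum Submodule Subalgebra

theorem mem_colonIdeal {A : Type*} [Ring A] {I : Ideal A} {x a : A} :
    a ∈ colonIdeal I x ↔ a * x ∈ I := Iff.rfl

section Graded

variable {K C : Type*} [Field K] [Ring C] [Algebra K C] {𝒞 : ℕ → Submodule K C} [GradedAlgebra 𝒞]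

theorem restrictScalars_ideal_span_le_top_mul (S : Set C) :
    (Ideal.span S).restrictScalars K ≤ ⊤ * span K S := by
  intro z hz
  induction hz using Submodule.span_induction with
  | mem s hs => simpa using mul_mem_mul (mem_top (x := (1 : C))) (subset_span hs)
  | zero => exact zero_mem _
  | add _ _ _ _ hy hz => exact add_mem hy hz
  | smul c z _ hz =>
    have := mul_mem_mul (mem_top (x := c)) hz
    rw [← mul_assoc] at this
    exact (mul_le_mul_left le_top _ : ⊤ * ⊤ * span K S ≤ _) this

theorem mul_span_le_restrictScalars_ideal_span (M : Submodule K C) (S : Set C) :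
    M * span K S ≤ (Ideal.span S).restrictScalars K :=
  mul_le.2 fun _ _ _ hb ↦ Ideal.mul_mem_left _ _ (span_le_restrictScalars K C S hb)

theorem coe_decompose_succ_mem_mul_span {S : Set C} (hS : S ⊆ 𝒞 1) {z : C}
    (hz : z ∈ Ideal.span S) (m : ℕ) : (decompose 𝒞 z (m + 1) : C) ∈ 𝒞 m * span K S := by
  -- `I = ⨆ i, 𝒞 i * span K S`, and the `i`-th summand lies in degree `i + 1`
  have hz' := restrictScalars_ideal_span_le_top_mul (K := K) S hz
  rw [← (Decomposition.isInternal 𝒞).submodule_iSup_eq_top, iSup_mul] at hz'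
  clear hz
  induction hz' using Submodule.iSup_induction' with
  | mem i y hy =>
    have hyi : y ∈ 𝒞 (i + 1) := mul_le.2 (fun a ha b hb ↦ SetLike.mul_mem_graded ha
      (span_le.2 hS hb)) hy
    obtain rfl | hne := eq_or_ne i m
    · rwa [decompose_of_mem_same 𝒞 hyi]
    · rw [decompose_of_mem_ne 𝒞 hyi (by omega)]
      exact zero_mem _
  | zero => simp
  | add _ _ _ _ hy hz => simpa using add_mem hy hz

theorem coe_decompose_succ_mem_ideal_span {S : Set C} (hS : S ⊆ 𝒞 1) {z : C}
    (hz : z ∈ Ideal.span S) (m : ℕ) : (decompose 𝒞 z (m + 1) : C) ∈ Ideal.span S :=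
  mul_span_le_restrictScalars_ideal_span _ S (coe_decompose_succ_mem_mul_span hS hz m)

theorem mem_of_mem_ideal_span_of_mem_degOne (hconn : 𝒞 0 = 1) {V : Submodule K C}
    (hV : V ≤ 𝒞 1) {y : C} (hy : y ∈ Ideal.span (V : Set C)) (hy1 : y ∈ 𝒞 1) : y ∈ V := by
  have := coe_decompose_succ_mem_mul_span hV hy 0
  rwa [decompose_of_mem_same 𝒞 hy1, hconn, span_eq, Submodule.one_mul] at this

theorem mem_ideal_span_of_mem_adjoin {T : Set C} (hT : T ⊆ 𝒞 1) {u : C}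
    (hu : u ∈ Algebra.adjoin K T) {n : ℕ} (hun : u ∈ 𝒞 n) (hn : 1 ≤ n) : u ∈ Ideal.span T := by
  set L := (Ideal.span T).restrictScalars K
  have hmul : (1 ⊔ L) * (1 ⊔ L) ≤ 1 ⊔ L := by
    have hLL : L * L ≤ L := mul_le.2 fun a _ _ hb ↦ Ideal.mul_mem_left _ a hb
    simp only [Submodule.mul_sup, Submodule.sup_mul, Submodule.one_mul, Submodule.mul_one]
    exact sup_le (sup_le le_sup_left le_sup_right) (sup_le le_sup_right (hLL.trans le_sup_right))
  have hadjoin : ∀ y ∈ Algebra.adjoin K T, y ∈ 1 ⊔ L := fun y hy ↦ by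
    induction hy using Algebra.adjoin_induction with
    | mem t ht => exact mem_sup_right (Ideal.subset_span ht)
    | algebraMap r => exact mem_sup_left (algebraMap_mem r)
    | add _ _ _ _ hp hq => exact add_mem hp hq
    | mul _ _ _ _ hp hq => exact hmul (mul_mem_mul hp hq)
  obtain ⟨k, hk, l, hl, rfl⟩ := mem_sup.1 (hadjoin u hu)
  obtain ⟨m, rfl⟩ : ∃ m, n = m + 1 := ⟨n - 1, by omega⟩
  have hk0 : k ∈ 𝒞 0 := one_le.2 (SetLike.one_mem_graded 𝒞) hk
  rw [← decompose_of_mem_same 𝒞 hun, decompose_add, DirectSum.add_apply, coe_add,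
    decompose_of_mem_ne 𝒞 hk0 (by omega), zero_add]
  exact coe_decompose_succ_mem_ideal_span hT hl m

theorem genInDeg1_colonIdeal_of_forall_homogeneous (hconn : 𝒞 0 = 1) {S : Set C}
    (hS : S ⊆ 𝒞 1) {x : C} (hx : x ∈ 𝒞 1) (hxS : x ∉ Ideal.span S)
    (h : ∀ n, 1 ≤ n → ∀ z ∈ 𝒞 n, z * x ∈ Ideal.span S →
      z ∈ Ideal.span {c | c ∈ 𝒞 1 ∧ c * x ∈ Ideal.span S}) :
    GenInDeg1 (𝒞 1 : Set C) (colonIdeal (Ideal.span S) x) := by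
  classical
  refine ⟨{c | c ∈ 𝒞 1 ∧ c * x ∈ Ideal.span S}, fun c hc ↦ hc.1,
    le_antisymm (fun z hz ↦ ?_) (Ideal.span_le.2 fun c hc ↦ hc.2)⟩
  rw [← sum_support_decompose 𝒞 z]
  refine sum_mem fun n _ ↦ ?_
  have hzx : (decompose 𝒞 z n : C) * x ∈ Ideal.span S := by
    rw [← coe_decompose_mul_add_of_right_mem 𝒞 hx]
    exact coe_decompose_succ_mem_ideal_span hS hz n
  rcases Nat.eq_zero_or_pos n with rfl | hn
  · have hz0 : (decompose 𝒞 z 0 : C) ∈ (1 : Submodule K C) := hconn ▸ (decompose 𝒞 z 0).2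
    obtain ⟨r, hr⟩ := mem_one.1 hz0
    obtain rfl | hr0 := eq_or_ne r 0
    · simp [← hr]
    · refine absurd ?_ hxS
      rw [← hr, ← Algebra.smul_def] at hzx
      simpa [inv_smul_smul₀ hr0] using (Ideal.span S).smul_of_tower_mem r⁻¹ hzx
  · exact h n hn _ (decompose 𝒞 z n).2 hzx

end Graded

section InternalSum

variable {K C : Type*} [Field K] [Ring C] [Algebra K C]

/-- The internal direct sum `C = A ⊓ B`, stated degreewise. -/
structure IsInternalSum (𝒞 : ℕ → Submodule K C) (SA SB : Subalgebra K C) : Prop where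
  sup_eq : ∀ n, 1 ≤ n → 𝒞 n = (toSubmodule SA ⊓ 𝒞 n) ⊔ (toSubmodule SB ⊓ 𝒞 n)
  inf_eq_bot : ∀ n, 1 ≤ n → (toSubmodule SA ⊓ 𝒞 n) ⊓ (toSubmodule SB ⊓ 𝒞 n) = ⊥
  mul_eq_zero : ∀ {m n : ℕ} {u w : C}, 1 ≤ m → 1 ≤ n → u ∈ toSubmodule SA ⊓ 𝒞 m →
    w ∈ toSubmodule SB ⊓ 𝒞 n → u * w = 0 ∧ w * u = 0

/-- `V_A`: the projection of `span K S ⊆ C_1` to `A_1` along `B_1`. -/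
def degOneProj (𝒞 : ℕ → Submodule K C) (SA SB : Subalgebra K C) (S : Set C) :
    Submodule K C :=
  (toSubmodule SA ⊓ 𝒞 1) ⊓ (span K S ⊔ (toSubmodule SB ⊓ 𝒞 1))

def UniversallyKoszul (𝒞 : ℕ → Submodule K C) (SA : Subalgebra K C) : Prop :=
  ∀ I : Ideal SA, GenInDeg1 {y : SA | (y : C) ∈ 𝒞 1} I →
    ∀ x : SA, (x : C) ∈ 𝒞 1 → x ∉ I → GenInDeg1 {y : SA | (y : C) ∈ 𝒞 1} (colonIdeal I x)

variable {𝒞 : ℕ → Submodule K C} {SA SB : Subalgebra K C}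

theorem degOneProj_le (S : Set C) : degOneProj 𝒞 SA SB S ≤ 𝒞 1 :=
  inf_le_left.trans inf_le_right

theorem toSubmodule_inf_mul_degOneProj_le [GradedAlgebra 𝒞] (S : Set C) (n : ℕ) :
    (toSubmodule SA ⊓ 𝒞 n) * degOneProj 𝒞 SA SB S ≤ toSubmodule SA ⊓ 𝒞 (n + 1) :=
  mul_le.2 fun _ hu _ ha ↦ ⟨SA.mul_mem hu.1 ha.1.1, SetLike.mul_mem_graded hu.2 ha.1.2⟩

namespace IsInternalSum

theorem symm (h : IsInternalSum 𝒞 SA SB) : IsInternalSum 𝒞 SB SA where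
  sup_eq n hn := (h.sup_eq n hn).trans (sup_comm _ _)
  inf_eq_bot n hn := (inf_comm _ _).trans (h.inf_eq_bot n hn)
  mul_eq_zero hm hn hu hw := (h.mul_eq_zero hn hm hw hu).symm

variable (h : IsInternalSum 𝒞 SA SB)
include h

theorem exists_add_eq {n : ℕ} (hn : 1 ≤ n) {c : C} (hc : c ∈ 𝒞 n) :
    ∃ a ∈ toSubmodule SA ⊓ 𝒞 n, ∃ b ∈ toSubmodule SB ⊓ 𝒞 n, a + b = c :=
  mem_sup.1 (h.sup_eq n hn ▸ hc)

theorem eq_of_add_eq_add {n : ℕ} (hn : 1 ≤ n) {u p w q : C}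
    (hu : u ∈ toSubmodule SA ⊓ 𝒞 n) (hp : p ∈ toSubmodule SA ⊓ 𝒞 n)
    (hw : w ∈ toSubmodule SB ⊓ 𝒞 n) (hq : q ∈ toSubmodule SB ⊓ 𝒞 n)
    (heq : u + w = p + q) : u = p := by
  have hmem : u - p ∈ (toSubmodule SA ⊓ 𝒞 n) ⊓ (toSubmodule SB ⊓ 𝒞 n) :=
    ⟨sub_mem hu hp, (by rw [sub_eq_sub_iff_add_eq_add, add_comm q, heq] : u - p = q - w) ▸
      sub_mem hq hw⟩
  rw [h.inf_eq_bot n hn, mem_bot, sub_eq_zero] at hmem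
  exact hmem

theorem mul_degOneProj_le (S : Set C) {n : ℕ} (hn : 1 ≤ n) :
    𝒞 n * degOneProj 𝒞 SA SB S ≤ (Ideal.span S).restrictScalars K := by
  refine mul_le.2 fun c hc a ha ↦ ?_
  obtain ⟨ca, hca, cb, hcb, rfl⟩ := h.exists_add_eq hn hc
  obtain ⟨v, hv, b, hb, rfl⟩ := mem_sup.1 ha.2
  rw [add_mul, (h.mul_eq_zero le_rfl hn ha.1 hcb).2, add_zero, mul_add,
    (h.mul_eq_zero hn le_rfl hca hb).1, add_zero]
  exact Ideal.mul_mem_left _ _ (span_le_restrictScalars K C S hv)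

theorem mul_span_le [GradedAlgebra 𝒞] {S : Set C} (hS : S ⊆ 𝒞 1) {m : ℕ} (hm : 1 ≤ m) :
    𝒞 m * span K S ≤ (toSubmodule SA ⊓ 𝒞 m) * degOneProj 𝒞 SA SB S ⊔
      (toSubmodule SB ⊓ 𝒞 m) * degOneProj 𝒞 SB SA S := by
  refine mul_le.2 fun d hd s hs ↦ ?_
  obtain ⟨da, hda, db, hdb, rfl⟩ := h.exists_add_eq hm hd
  obtain ⟨sa, hsa, sb, hsb, rfl⟩ := h.exists_add_eq le_rfl (span_le.2 hS hs)
  have hsa' : sa ∈ degOneProj 𝒞 SA SB S :=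
    ⟨hsa, mem_sup.2 ⟨_, hs, -sb, neg_mem hsb, add_neg_cancel_right sa sb⟩⟩
  have hsb' : sb ∈ degOneProj 𝒞 SB SA S :=
    ⟨hsb, mem_sup.2 ⟨_, hs, -sa, neg_mem hsa, by abel⟩⟩
  rw [add_mul, mul_add, mul_add, (h.mul_eq_zero hm le_rfl hda hsb).1,
    (h.mul_eq_zero le_rfl hm hsa hdb).2, add_zero, zero_add]
  exact add_mem_sup (mul_mem_mul hda hsa') (mul_mem_mul hdb hsb')

theorem mul_mem_mul_degOneProj [GradedAlgebra 𝒞] {S : Set C} (hS : S ⊆ 𝒞 1) {n : ℕ}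
    (hn : 1 ≤ n) {u w xa xb : C} (hu : u ∈ toSubmodule SA ⊓ 𝒞 n)
    (hw : w ∈ toSubmodule SB ⊓ 𝒞 n) (hxa : xa ∈ toSubmodule SA ⊓ 𝒞 1)
    (hxb : xb ∈ toSubmodule SB ⊓ 𝒞 1) (hI : u * xa + w * xb ∈ Ideal.span S) :
    u * xa ∈ (toSubmodule SA ⊓ 𝒞 n) * degOneProj 𝒞 SA SB S := by
  have hdeg : u * xa + w * xb ∈ 𝒞 (n + 1) :=
    add_mem (SetLike.mul_mem_graded hu.2 hxa.2) (SetLike.mul_mem_graded hw.2 hxb.2)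
  have hsplit := h.mul_span_le hS hn (coe_decompose_succ_mem_mul_span hS hI n)
  rw [decompose_of_mem_same 𝒞 hdeg] at hsplit
  obtain ⟨p, hp, q, hq, hpq⟩ := mem_sup.1 hsplit
  rwa [h.eq_of_add_eq_add (by omega) ⟨SA.mul_mem hu.1 hxa.1, SetLike.mul_mem_graded hu.2 hxa.2⟩
    (toSubmodule_inf_mul_degOneProj_le S n hp) ⟨SB.mul_mem hw.1 hxb.1,
      SetLike.mul_mem_graded hw.2 hxb.2⟩ (toSubmodule_inf_mul_degOneProj_le S n hq) hpq.symm]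

theorem mem_span_of_mem_degOneProj [GradedAlgebra 𝒞] {S : Set C}
    (hAgen : Algebra.adjoin K ((SA : Set C) ∩ (𝒞 1 : Set C)) = SA) {xa : C}
    (hxa : xa ∈ degOneProj 𝒞 SA SB S) {n : ℕ} (hn : 1 ≤ n) {u : C}
    (hu : u ∈ toSubmodule SA ⊓ 𝒞 n) :
    u ∈ Ideal.span {c | c ∈ SA ∧ c ∈ 𝒞 1 ∧ c * xa ∈ Ideal.span S} := by
  have hu' : u ∈ Algebra.adjoin K ((SA : Set C) ∩ (𝒞 1 : Set C)) := by rw [hAgen]; exact hu.1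
  refine Ideal.span_mono ?_ (mem_ideal_span_of_mem_adjoin (fun c hc ↦ hc.2) hu' hu.2 hn)
  rintro c ⟨hcA, hc1⟩
  exact ⟨hcA, hc1, h.mul_degOneProj_le S le_rfl (mul_mem_mul hc1 hxa)⟩

theorem mem_span_of_not_mem_degOneProj [GradedAlgebra 𝒞] (hconn : 𝒞 0 = 1) {S : Set C}
    (hA : UniversallyKoszul 𝒞 SA) {xa : C} (hxa : xa ∈ toSubmodule SA ⊓ 𝒞 1)
    (hxV : xa ∉ degOneProj 𝒞 SA SB S) {u : C} (hu : u ∈ SA)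
    (hmul : u * xa ∈ toSubmodule SA * degOneProj 𝒞 SA SB S) :
    u ∈ Ideal.span {c | c ∈ SA ∧ c ∈ 𝒞 1 ∧ c * xa ∈ Ideal.span S} := by
  set V := degOneProj 𝒞 SA SB S
  set J : Ideal SA := Ideal.span (SA.val ⁻¹' V)
  have hJ : ∀ j ∈ J, (j : C) ∈ Ideal.span (V : Set C) := fun j hj ↦ by
    have := Ideal.mem_map_of_mem SA.val hj
    rw [Ideal.map_span] at this
    exact Ideal.span_mono (Set.image_preimage_subset _ _) this
  -- `J ∩ A_1 = V` since `C_0 = K`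
  have hxJ : (⟨xa, hxa.1⟩ : SA) ∉ J := fun hx ↦
    hxV (mem_of_mem_ideal_span_of_mem_degOne hconn (degOneProj_le S) (hJ _ hx) hxa.2)
  have huJ : (⟨u, hu⟩ * ⟨xa, hxa.1⟩ : SA) ∈ J := by
    have hle : toSubmodule SA * V ≤ (J.restrictScalars K).map SA.val.toLinearMap :=
      mul_le.2 fun c hc a ha ↦
        ⟨⟨c, hc⟩ * ⟨a, ha.1.1⟩, J.mul_mem_left _ (Ideal.subset_span ha), rfl⟩
    obtain ⟨j, hj, hju⟩ := hle hmul
    exact (Subtype.ext hju : j = ⟨u, hu⟩ * ⟨xa, hxa.1⟩) ▸ hj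
  obtain ⟨T, hT1, hTeq⟩ := hA J ⟨_, fun y hy ↦ degOneProj_le S hy, rfl⟩ ⟨xa, hxa.1⟩ hxa.2 hxJ
  have huT : (⟨u, hu⟩ : SA) ∈ Ideal.span T := hTeq ▸ huJ
  have := Ideal.mem_map_of_mem SA.val huT
  rw [Ideal.map_span] at this
  refine Ideal.span_mono ?_ this
  rintro _ ⟨t, ht, rfl⟩
  have htJ : t * ⟨xa, hxa.1⟩ ∈ J := mem_colonIdeal.1 (hTeq ▸ Ideal.subset_span ht)
  have htxV : (t : C) * xa ∈ Ideal.span (V : Set C) := hJ _ htJ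
  have htx := coe_decompose_succ_mem_mul_span (degOneProj_le S) htxV 1
  rw [decompose_of_mem_same 𝒞 (SetLike.mul_mem_graded (hT1 ht) hxa.2), span_eq] at htx
  exact ⟨t.2, hT1 ht, h.mul_degOneProj_le S le_rfl htx⟩

theorem mem_span_of_mul_mem_mul_degOneProj [GradedAlgebra 𝒞] (hconn : 𝒞 0 = 1) {S : Set C}
    (hAgen : Algebra.adjoin K ((SA : Set C) ∩ (𝒞 1 : Set C)) = SA)
    (hA : UniversallyKoszul 𝒞 SA) {xa : C} (hxa : xa ∈ toSubmodule SA ⊓ 𝒞 1) {n : ℕ}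
    (hn : 1 ≤ n) {u : C} (hu : u ∈ toSubmodule SA ⊓ 𝒞 n)
    (hmul : u * xa ∈ (toSubmodule SA ⊓ 𝒞 n) * degOneProj 𝒞 SA SB S) :
    u ∈ Ideal.span {c | c ∈ SA ∧ c ∈ 𝒞 1 ∧ c * xa ∈ Ideal.span S} := by
  by_cases hxV : xa ∈ degOneProj 𝒞 SA SB S
  · exact h.mem_span_of_mem_degOneProj hAgen hxV hn hu
  · exact h.mem_span_of_not_mem_degOneProj hconn hA hxa hxV hu.1
      ((mul_le_mul_left inf_le_left _ : _ ≤ toSubmodule SA * _) hmul)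

end IsInternalSum

end InternalSum

theorem stmt4_general {K C : Type*} [Field K] [Ring C] [Algebra K C]
    (𝒞 : ℕ → Submodule K C) [GradedAlgebra 𝒞]
    (hconn : 𝒞 0 = 1)
    (SA SB : Subalgebra K C)
    -- each generated in degree 1
    (hAgen : Algebra.adjoin K ((SA : Set C) ∩ ((𝒞 1 : Submodule K C) : Set C)) = SA)
    (hBgen : Algebra.adjoin K ((SB : Set C) ∩ ((𝒞 1 : Submodule K C) : Set C)) = SB)
    -- `C_n = A_n ⊕ B_n` for all `n ≥ 1`
    (hsum : ∀ n, 1 ≤ n →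
      𝒞 n = (Subalgebra.toSubmodule SA ⊓ 𝒞 n) ⊔ (Subalgebra.toSubmodule SB ⊓ 𝒞 n))
    (hdisj : ∀ n, 1 ≤ n →
      (Subalgebra.toSubmodule SA ⊓ 𝒞 n) ⊓ (Subalgebra.toSubmodule SB ⊓ 𝒞 n) = ⊥)
    -- `a·b = b·a = 0` for all `a ∈ A_+` and `b ∈ B_+`
    (hann : ∀ u ∈ SA, ∀ w ∈ SB,
      ((DirectSum.decompose 𝒞 u 0 : 𝒞 0) : C) = 0 →
      ((DirectSum.decompose 𝒞 w 0 : 𝒞 0) : C) = 0 → u * w = 0 ∧ w * u = 0)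
    -- `A` is universally Koszul
    (hA : ∀ I : Ideal SA, GenInDeg1 {y : SA | (y : C) ∈ 𝒞 1} I →
      ∀ x : SA, (x : C) ∈ 𝒞 1 → x ∉ I →
        GenInDeg1 {y : SA | (y : C) ∈ 𝒞 1} (colonIdeal I x))
    -- `B` is universally Koszul
    (hB : ∀ I : Ideal SB, GenInDeg1 {y : SB | (y : C) ∈ 𝒞 1} I →
      ∀ x : SB, (x : C) ∈ 𝒞 1 → x ∉ I →
        GenInDeg1 {y : SB | (y : C) ∈ 𝒞 1} (colonIdeal I x)) :
    ∀ I : Ideal C, GenInDeg1 ((𝒞 1 : Submodule K C) : Set C) I →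
      ∀ x ∈ 𝒞 1, x ∉ I →
        GenInDeg1 ((𝒞 1 : Submodule K C) : Set C) (colonIdeal I x) := by
  have hAB : IsInternalSum 𝒞 SA SB := ⟨hsum, hdisj, fun hm hn hu hw ↦
    hann _ hu.1 _ hw.1 (decompose_of_mem_ne 𝒞 hu.2 (by omega))
      (decompose_of_mem_ne 𝒞 hw.2 (by omega))⟩
  rintro I ⟨S, hS, rfl⟩ x hx hxS
  refine genInDeg1_colonIdeal_of_forall_homogeneous hconn hS hx hxS fun n hn z hz hzx ↦ ?_
  obtain ⟨xa, hxa, xb, hxb, rfl⟩ := hAB.exists_add_eq le_rfl hx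
  obtain ⟨u, hu, w, hw, rfl⟩ := hAB.exists_add_eq hn hz
  rw [add_mul, mul_add, mul_add, (hAB.mul_eq_zero hn le_rfl hu hxb).1,
    (hAB.mul_eq_zero le_rfl hn hxa hw).2, add_zero, zero_add] at hzx
  have hu' := hAB.mem_span_of_mul_mem_mul_degOneProj hconn hAgen hA hxa hn hu
    (hAB.mul_mem_mul_degOneProj hS hn hu hw hxa hxb hzx)
  have hw' := hAB.symm.mem_span_of_mul_mem_mul_degOneProj hconn hBgen hB hxb hn hw
    (hAB.symm.mul_mem_mul_degOneProj hS hn hw hu hxb hxa (add_comm (u * xa) _ ▸ hzx))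
  refine add_mem (Ideal.span_mono ?_ hu') (Ideal.span_mono ?_ hw')
  · rintro c ⟨hcA, hc1, hcx⟩
    exact ⟨hc1, by rwa [mul_add, (hAB.mul_eq_zero le_rfl le_rfl ⟨hcA, hc1⟩ hxb).1, add_zero]⟩
  · rintro c ⟨hcB, hc1, hcx⟩
    exact ⟨hc1, by rwa [mul_add, (hAB.mul_eq_zero le_rfl le_rfl hxa ⟨hcB, hc1⟩).2, zero_add]⟩

/-- Let `C` be a connected graded `K`-algebra generated in degree 1
which is the internal direct sum `C = A ⊓ B` of graded subalgebras `A` and `B`, each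
generated in degree 1, with `C_n = A_n ⊕ B_n` for `n ≥ 1` and `A_+·B_+ = B_+·A_+ = 0`.
If `A` and `B` are universally Koszul (colon ideals of ideals generated in degree 1 by
degree-one elements outside them are again generated in degree 1), then so is `C`. -/
theorem stmt4 {K C : Type*} [Field K] [Ring C] [Algebra K C]
    (𝒞 : ℕ → Submodule K C) [GradedAlgebra 𝒞]
    (hconn : 𝒞 0 = 1)
    (hgen : Algebra.adjoin K ((𝒞 1 : Submodule K C) : Set C) = ⊤)
    (SA SB : Subalgebra K C)
    -- `A` and `B` are graded subalgebras (closed under homogeneous components)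
    (hAhom : ∀ y ∈ SA, ∀ n : ℕ, ((DirectSum.decompose 𝒞 y n : 𝒞 n) : C) ∈ SA)
    (hBhom : ∀ y ∈ SB, ∀ n : ℕ, ((DirectSum.decompose 𝒞 y n : 𝒞 n) : C) ∈ SB)
    -- each generated in degree 1
    (hAgen : Algebra.adjoin K ((SA : Set C) ∩ ((𝒞 1 : Submodule K C) : Set C)) = SA)
    (hBgen : Algebra.adjoin K ((SB : Set C) ∩ ((𝒞 1 : Submodule K C) : Set C)) = SB)
    -- `C_n = A_n ⊕ B_n` for all `n ≥ 1`
    (hsum : ∀ n, 1 ≤ n →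
      𝒞 n = (Subalgebra.toSubmodule SA ⊓ 𝒞 n) ⊔ (Subalgebra.toSubmodule SB ⊓ 𝒞 n))
    (hdisj : ∀ n, 1 ≤ n →
      (Subalgebra.toSubmodule SA ⊓ 𝒞 n) ⊓ (Subalgebra.toSubmodule SB ⊓ 𝒞 n) = ⊥)
    -- `a·b = b·a = 0` for all `a ∈ A_+` and `b ∈ B_+`
    (hann : ∀ u ∈ SA, ∀ w ∈ SB,
      ((DirectSum.decompose 𝒞 u 0 : 𝒞 0) : C) = 0 →
      ((DirectSum.decompose 𝒞 w 0 : 𝒞 0) : C) = 0 → u * w = 0 ∧ w * u = 0)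
    -- `A` is universally Koszul
    (hA : ∀ I : Ideal SA, GenInDeg1 {y : SA | (y : C) ∈ 𝒞 1} I →
      ∀ x : SA, (x : C) ∈ 𝒞 1 → x ∉ I →
        GenInDeg1 {y : SA | (y : C) ∈ 𝒞 1} (colonIdeal I x))
    -- `B` is universally Koszul
    (hB : ∀ I : Ideal SB, GenInDeg1 {y : SB | (y : C) ∈ 𝒞 1} I →
      ∀ x : SB, (x : C) ∈ 𝒞 1 → x ∉ I →
        GenInDeg1 {y : SB | (y : C) ∈ 𝒞 1} (colonIdeal I x)) :
    ∀ I : Ideal C, GenInDeg1 ((𝒞 1 : Submodule K C) : Set C) I →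
      ∀ x ∈ 𝒞 1, x ∉ I →
        GenInDeg1 ((𝒞 1 : Submodule K C) : Set C) (colonIdeal I x) :=
  stmt4_general 𝒞 hconn SA SB hAgen hBgen hsum hdisj hann hA hB
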